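/- For every sentence α := Q₁x₁Q₂x₂⋯Qₙxₙ β in prenex normal form of the first-order language FO(R) (variables only, no equality, single binary relation R), α is satisfiable in a first-order structure if and only if the translated formula φ_α := (∀z□)²ψ_α ∧ λ_{n+2} ∧ γₙ is satisfiable at some world of some constant domain model under some valuation. -/
import Mathlib


/-! ### First-order logic FO(R): variables only, no equality, one binary relation -/

/-- Quantifier-free FO(R) formulas. -/
inductive QF : Type
  | rel (x y : ℕ)
  | neg (β : QF)
  | and (β₁ β₂ : QF)

/-- Prenex FO(R) formulas `Q₁x₁⋯Qₙxₙ β` with `β` quantifier-free. -/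
inductive Prenex : Type
  | qf  (β : QF)
  | ex  (x : ℕ) (α : Prenex)
  | all (x : ℕ) (α : Prenex)

def QF.vars : QF → Finset ℕ
  | rel x y   => {x, y}
  | neg β     => β.vars
  | and β₁ β₂ => β₁.vars ∪ β₂.vars

/-- All variables appearing in a prenex formula. -/
def Prenex.vars : Prenex → Finset ℕ
  | qf β    => β.vars
  | ex x α  => insert x α.vars
  | all x α => insert x α.vars

/-- Free variables of a prenex formula. -/
def Prenex.free : Prenex → Finset ℕ
  | qf β    => β.vars
  | ex x α  => α.free.erase x
  | all x α => α.free.erase x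

/-- The quantifier depth (length of the quantifier prefix). -/
def Prenex.depth : Prenex → ℕ
  | qf _    => 0
  | ex _ α  => α.depth + 1
  | all _ α => α.depth + 1

def QF.Sat {D : Type} (Rel : D → D → Prop) (v : ℕ → D) : QF → Prop
  | rel x y   => Rel (v x) (v y)
  | neg β     => ¬ β.Sat Rel v
  | and β₁ β₂ => β₁.Sat Rel v ∧ β₂.Sat Rel v

def Prenex.Sat {D : Type} (Rel : D → D → Prop) (v : ℕ → D) : Prenex → Prop
  | qf β    => β.Sat Rel v
  | ex x α  => ∃ d : D, α.Sat Rel (Function.update v x d)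
  | all x α => ∀ d : D, α.Sat Rel (Function.update v x d)

/-- First-order satisfiability of a prenex FO(R) formula. -/
def FOSatisfiable (α : Prenex) : Prop :=
  ∃ (D : Type), Nonempty D ∧ ∃ (Rel : D → D → Prop) (v : ℕ → D), α.Sat Rel v

/-! ### The ∀□/∃◇ bundled modal fragment, with unary predicates -/

/-- The bundled fragment `L_{∀□}` with unary atoms (predicate `P` is coded `0`,
predicate `Q` is coded `1`); `∃x◇`, `→` and `⊤` are the usual abbreviations. -/
inductive MF : Type
  | atom   (p : ℕ) (x : ℕ)
  | neg    (φ : MF)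
  | and    (φ ψ : MF)
  | allBox (x : ℕ) (φ : MF)

/-- `∃x◇φ := ¬∀x□¬φ`. -/
def MF.exDia (x : ℕ) (φ : MF) : MF := .neg (.allBox x (.neg φ))

/-- `⊤` as an abbreviation. -/
def MF.top : MF := .neg (.and (.atom 0 0) (.neg (.atom 0 0)))

/-- `φ → ψ := ¬(φ ∧ ¬ψ)`. -/
def MF.imp (φ ψ : MF) : MF := .neg (.and φ (.neg ψ))

/-- A constant domain model with worlds `W`, domain `D`, and unary predicates. -/
structure ConstModel (W D : Type) : Type where
  R : W → W → Prop
  nonempty_W : Nonempty W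
  nonempty_D : Nonempty D
  val : W → ℕ → D → Prop

/-- Constant-domain satisfaction: `∀x□φ` holds at `w` under `σ` iff for all `d ∈ D`
and all `v` with `wRv`, `φ` holds at `v` under `σ[x↦d]`. -/
def MSat {W D : Type} (M : ConstModel W D) : W → (ℕ → D) → MF → Prop
  | w, σ, .atom p x   => M.val w p (σ x)
  | w, σ, .neg φ      => ¬ MSat M w σ φ
  | w, σ, .and φ ψ    => MSat M w σ φ ∧ MSat M w σ ψ
  | w, σ, .allBox x φ =>
      ∀ d : D, ∀ v : W, M.R w v → MSat M v (Function.update σ x d) φ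

/-- Modal satisfiability over constant domain models. -/
def MSatisfiable (φ : MF) : Prop :=
  ∃ (W D : Type) (M : ConstModel W D) (w : W) (σ : ℕ → D), MSat M w σ φ

/-! ### The translation -/

/-- `Tr` on quantifier-free formulas: `Tr(Rxy) := ∃z◇(Px ∧ Qy)`. -/
def trQF (z : ℕ) : QF → MF
  | .rel x y   => MF.exDia z (.and (.atom 0 x) (.atom 1 y))
  | .neg β     => .neg (trQF z β)
  | .and β₁ β₂ => .and (trQF z β₁) (trQF z β₂)

/-- `ψ_α := Q₁x₁Δ₁ ⋯ QₙxₙΔₙ Tr(β)`, where `QᵢxᵢΔᵢ` is `∃xᵢ◇` when `Qᵢ = ∃` and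
`∀xᵢ□` when `Qᵢ = ∀`. -/
def psiTr (z : ℕ) : Prenex → MF
  | .qf β    => trQF z β
  | .ex x α  => MF.exDia x (psiTr z α)
  | .all x α => MF.allBox x (psiTr z α)

/-- `(∀z□)^j φ`. -/
def iterBox (z : ℕ) : ℕ → MF → MF
  | 0, φ     => φ
  | n + 1, φ => MF.allBox z (iterBox z n φ)

/-- `(∃z◇)^j φ`. -/
def iterDia (z : ℕ) : ℕ → MF → MF
  | 0, φ     => φ
  | n + 1, φ => MF.exDia z (iterDia z n φ)

/-- `λₙ := ⋀_{j=0}^{n} (∀z□)^j (∃z◇⊤)`. -/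
def lamF (z : ℕ) : ℕ → MF
  | 0     => MF.exDia z MF.top
  | n + 1 => .and (lamF z n) (iterBox z (n + 1) (MF.exDia z MF.top))

/-- `γₙ := ∀z₁□∀z₂□((∃z◇)ⁿ(∃z◇(Pz₁∧Qz₂)) → (∀z□)ⁿ(∃z◇(Pz₁∧Qz₂)))`. -/
def gamF (z z₁ z₂ n : ℕ) : MF :=
  .allBox z₁ (.allBox z₂
    (MF.imp (iterDia z n (MF.exDia z (.and (.atom 0 z₁) (.atom 1 z₂))))
            (iterBox z n (MF.exDia z (.and (.atom 0 z₁) (.atom 1 z₂))))))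

/-- `φ_α := (∀z□)² ψ_α ∧ λ_{n+2} ∧ γₙ`, where `n` is the quantifier depth of `α`. -/
def phiTr (z z₁ z₂ : ℕ) (α : Prenex) : MF :=
  .and (iterBox z 2 (psiTr z α)) (.and (lamF z (α.depth + 2)) (gamF z z₁ z₂ α.depth))


/-! ### Auxiliary development -/

section Aux

variable {W D : Type}

/-- exactly-`k`-step reachability in a model -/
def reachN (M : ConstModel W D) : ℕ → W → W → Prop
  | 0 => fun w v => w = v
  | k + 1 => fun w v => ∃ x, M.R w x ∧ reachN M k x v

lemma reachN_snoc {M : ConstModel W D} :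
    ∀ {k : ℕ} {w v x : W}, reachN M k w v → M.R v x → reachN M (k + 1) w x := by
  intro k
  induction k with
  | zero => intro w v x h hr; cases h; exact ⟨x, hr, rfl⟩
  | succ k ih =>
      rintro w v x ⟨y, hy, h⟩ hr
      exact ⟨y, hy, ih h hr⟩

lemma reachN_trans {M : ConstModel W D} :
    ∀ {j k : ℕ} {w v x : W}, reachN M j w v → reachN M k v x → reachN M (j + k) w x := by
  intro j
  induction j with
  | zero =>
      intro k w v x h h2; cases h
      simpa [Nat.zero_add] using h2
  | succ j ih =>
      rintro k w v x ⟨y, hy, h⟩ h2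
      have : j + 1 + k = (j + k) + 1 := by omega
      rw [this]
      exact ⟨y, hy, ih h h2⟩

lemma msat_atom {M : ConstModel W D} {w σ p x} :
    MSat M w σ (.atom p x) ↔ M.val w p (σ x) := Iff.rfl

lemma msat_neg {M : ConstModel W D} {w σ φ} :
    MSat M w σ (.neg φ) ↔ ¬ MSat M w σ φ := Iff.rfl

lemma msat_and {M : ConstModel W D} {w σ φ ψ} :
    MSat M w σ (.and φ ψ) ↔ MSat M w σ φ ∧ MSat M w σ ψ := Iff.rfl

lemma msat_allBox {M : ConstModel W D} {w σ x φ} :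
    MSat M w σ (.allBox x φ) ↔
      ∀ d : D, ∀ v : W, M.R w v → MSat M v (Function.update σ x d) φ := Iff.rfl

lemma msat_exDia {M : ConstModel W D} {w σ x φ} :
    MSat M w σ (MF.exDia x φ) ↔
      ∃ d : D, ∃ v : W, M.R w v ∧ MSat M v (Function.update σ x d) φ := by
  simp only [MF.exDia, msat_neg, msat_allBox, not_forall]
  push_neg
  tauto

lemma msat_top {M : ConstModel W D} {w σ} : MSat M w σ MF.top :=
  fun h => h.2 h.1

lemma msat_imp {M : ConstModel W D} {w σ φ ψ} :
    MSat M w σ (MF.imp φ ψ) ↔ (MSat M w σ φ → MSat M w σ ψ) := by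
  simp only [MF.imp, msat_neg, msat_and, not_and, not_not]

lemma msat_atoms {M : ConstModel W D} {w : W} {σ : ℕ → D} {z x y : ℕ}
    (hx : x ≠ z) (hy : y ≠ z) :
    MSat M w σ (MF.exDia z (.and (.atom 0 x) (.atom 1 y))) ↔
      ∃ v, M.R w v ∧ M.val v 0 (σ x) ∧ M.val v 1 (σ y) := by
  rw [msat_exDia]
  constructor
  · rintro ⟨d, v, hr, h1, h2⟩
    rw [msat_atom, Function.update_of_ne hx] at h1
    rw [msat_atom, Function.update_of_ne hy] at h2
    exact ⟨v, hr, h1, h2⟩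
  · rintro ⟨v, hr, h1, h2⟩
    obtain ⟨d⟩ := M.nonempty_D
    refine ⟨d, v, hr, ?_, ?_⟩
    · rw [msat_atom, Function.update_of_ne hx]; exact h1
    · rw [msat_atom, Function.update_of_ne hy]; exact h2

lemma iterBox_elim {M : ConstModel W D} {z : ℕ} {ψ : MF} :
    ∀ {j : ℕ} {w v : W} {σ : ℕ → D}, MSat M w σ (iterBox z j ψ) → reachN M j w v →
      ∃ σ' : ℕ → D, (∀ a, a ≠ z → σ' a = σ a) ∧ MSat M v σ' ψ := by
  intro j
  induction j with
  | zero => intro w v σ h hr; cases hr; exact ⟨σ, fun _ _ => rfl, h⟩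
  | succ j ih =>
      rintro w v σ h ⟨x, hx, hr⟩
      obtain ⟨d⟩ := M.nonempty_D
      rw [iterBox, msat_allBox] at h
      obtain ⟨σ', ha, hs⟩ := ih (h d x hx) hr
      exact ⟨σ', fun a haz => (ha a haz).trans (Function.update_of_ne haz _ _), hs⟩

lemma iterBox_intro {M : ConstModel W D} {z : ℕ} {φ : MF}
    (h : ∀ w σ, MSat M w σ φ) : ∀ (j : ℕ) (w : W) (σ : ℕ → D), MSat M w σ (iterBox z j φ) := by
  intro j
  induction j with
  | zero => intro w σ; exact h w σ
  | succ j ih =>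
      intro w σ
      rw [iterBox, msat_allBox]
      intro d v _
      exact ih v _

lemma iterDia_intro {M : ConstModel W D} {z z₁ z₂ : ℕ} (h1 : z₁ ≠ z) (h2 : z₂ ≠ z) :
    ∀ {j : ℕ} {w v : W} {τ : ℕ → D}, reachN M j w v →
      (∃ x, M.R v x ∧ M.val x 0 (τ z₁) ∧ M.val x 1 (τ z₂)) →
      MSat M w τ (iterDia z j (MF.exDia z (.and (.atom 0 z₁) (.atom 1 z₂)))) := by
  intro j
  induction j with
  | zero =>
      intro w v τ hr hA; cases hr
      exact (msat_atoms h1 h2).mpr hA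
  | succ j ih =>
      rintro w v τ ⟨x, hx, hr⟩ hA
      obtain ⟨d⟩ := M.nonempty_D
      rw [iterDia, msat_exDia]
      refine ⟨d, x, hx, ih hr ?_⟩
      rwa [Function.update_of_ne h1, Function.update_of_ne h2]

lemma iterBox_elim_atoms {M : ConstModel W D} {z z₁ z₂ : ℕ} (h1 : z₁ ≠ z) (h2 : z₂ ≠ z)
    {j : ℕ} {w v : W} {τ : ℕ → D}
    (h : MSat M w τ (iterBox z j (MF.exDia z (.and (.atom 0 z₁) (.atom 1 z₂)))))
    (hr : reachN M j w v) :
    ∃ x, M.R v x ∧ M.val x 0 (τ z₁) ∧ M.val x 1 (τ z₂) := by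
  obtain ⟨σ', ha, hs⟩ := iterBox_elim h hr
  rw [msat_atoms h1 h2] at hs
  rwa [ha z₁ h1, ha z₂ h2] at hs

lemma qf_sat_congr {D : Type} {Rel : D → D → Prop} :
    ∀ {β : QF} {τ τ' : ℕ → D}, (∀ a ∈ β.vars, τ a = τ' a) →
      (β.Sat Rel τ ↔ β.Sat Rel τ') := by
  intro β
  induction β with
  | rel x y =>
      intro τ τ' h
      have hx : τ x = τ' x := h x (by simp [QF.vars])
      have hy : τ y = τ' y := h y (by simp [QF.vars])
      show Rel (τ x) (τ y) ↔ Rel (τ' x) (τ' y)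
      rw [hx, hy]
  | neg β ih =>
      intro τ τ' h
      exact not_congr (ih h)
  | and β₁ β₂ ih₁ ih₂ =>
      intro τ τ' h
      exact and_congr (ih₁ fun a ha => h a (by simp [QF.vars]; exact Or.inl ha))
        (ih₂ fun a ha => h a (by simp [QF.vars]; exact Or.inr ha))

lemma prenex_sat_congr {D : Type} {Rel : D → D → Prop} :
    ∀ {α : Prenex} {τ τ' : ℕ → D}, (∀ a ∈ α.vars, τ a = τ' a) →
      (α.Sat Rel τ ↔ α.Sat Rel τ') := by
  intro α
  induction α with
  | qf β => intro τ τ' h; exact qf_sat_congr h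
  | ex x αα ih =>
      intro τ τ' h
      refine exists_congr fun d => ih fun a ha => ?_
      by_cases hax : a = x
      · subst hax; simp
      · rw [Function.update_of_ne hax, Function.update_of_ne hax]
        exact h a (by simp [Prenex.vars]; exact Or.inr ha)
  | all x αα ih =>
      intro τ τ' h
      refine forall_congr' fun d => ih fun a ha => ?_
      by_cases hax : a = x
      · subst hax; simp
      · rw [Function.update_of_ne hax, Function.update_of_ne hax]
        exact h a (by simp [Prenex.vars]; exact Or.inr ha)

/-- quantifier-free translation correctness, abstract in the atomic semantics -/
lemma trQF_iff {M : ConstModel W D} {z : ℕ} {v : W} {Rel : D → D → Prop}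
    (hA : ∀ d e : D, (∃ x, M.R v x ∧ M.val x 0 d ∧ M.val x 1 e) ↔ Rel d e) :
    ∀ (β : QF) (τ : ℕ → D), z ∉ β.vars → (MSat M v τ (trQF z β) ↔ β.Sat Rel τ) := by
  intro β
  induction β with
  | rel x y =>
      intro τ hzv
      have hx : x ≠ z := by rintro rfl; exact hzv (by simp [QF.vars])
      have hy : y ≠ z := by rintro rfl; exact hzv (by simp [QF.vars])
      rw [trQF, msat_atoms hx hy]
      exact hA (τ x) (τ y)
  | neg β ih =>
      intro τ hzv
      exact not_congr (ih τ hzv)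
  | and β₁ β₂ ih₁ ih₂ =>
      intro τ hzv
      have h1 : z ∉ β₁.vars := fun h => hzv (by simp [QF.vars]; exact Or.inl h)
      have h2 : z ∉ β₂.vars := fun h => hzv (by simp [QF.vars]; exact Or.inr h)
      exact and_congr (ih₁ τ h1) (ih₂ τ h2)

/-- The main lemma for the backward direction. -/
lemma backward_main (M : ConstModel W D) (z n : ℕ) (u : W) (Rel : D → D → Prop)
    (hA : ∀ (v : W) (d e : D), reachN M n u v →
      ((∃ x, M.R v x ∧ M.val x 0 d ∧ M.val x 1 e) ↔ Rel d e))
    (hSucc : ∀ (m : ℕ) (v : W), m ≤ n → reachN M m u v → ∃ x, M.R v x) :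
    ∀ (α' : Prenex) (m : ℕ) (v : W) (τ : ℕ → D), m + α'.depth = n → z ∉ α'.vars →
      reachN M m u v → (MSat M v τ (psiTr z α') ↔ α'.Sat Rel τ) := by
  intro α'
  induction α' with
  | qf β =>
      intro m v τ hm hzv hr
      have hm' : m = n := by simpa [Prenex.depth] using hm
      subst hm'
      exact trQF_iff (fun d e => hA v d e hr) β τ hzv
  | ex x αα ih =>
      intro m v τ hm hzv hr
      have hd : m + 1 + αα.depth = n := by simp [Prenex.depth] at hm; omega
      have hzv' : z ∉ αα.vars := fun h => hzv (Finset.mem_insert_of_mem h)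
      rw [psiTr, msat_exDia]
      show (∃ d v', M.R v v' ∧ MSat M v' (Function.update τ x d) (psiTr z αα)) ↔
        ∃ d, αα.Sat Rel (Function.update τ x d)
      constructor
      · rintro ⟨d, v', hrv, hs⟩
        exact ⟨d, (ih (m + 1) v' _ hd hzv' (reachN_snoc hr hrv)).mp hs⟩
      · rintro ⟨d, hs⟩
        obtain ⟨v', hrv⟩ := hSucc m v (by omega) hr
        exact ⟨d, v', hrv, (ih (m + 1) v' _ hd hzv' (reachN_snoc hr hrv)).mpr hs⟩
  | all x αα ih =>
      intro m v τ hm hzv hr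
      have hd : m + 1 + αα.depth = n := by simp [Prenex.depth] at hm; omega
      have hzv' : z ∉ αα.vars := fun h => hzv (Finset.mem_insert_of_mem h)
      rw [psiTr, msat_allBox]
      show (∀ d v', M.R v v' → MSat M v' (Function.update τ x d) (psiTr z αα)) ↔
        ∀ d, αα.Sat Rel (Function.update τ x d)
      constructor
      · intro h d
        obtain ⟨v', hrv⟩ := hSucc m v (by omega) hr
        exact (ih (m + 1) v' _ hd hzv' (reachN_snoc hr hrv)).mp (h d v' hrv)
      · intro h d v' hrv
        exact (ih (m + 1) v' _ hd hzv' (reachN_snoc hr hrv)).mpr (h d)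

lemma lam_elim {M : ConstModel W D} {z : ℕ} :
    ∀ {m : ℕ} {w : W} {σ : ℕ → D}, MSat M w σ (lamF z m) →
      ∀ j, j ≤ m → ∀ v, reachN M j w v → ∃ x, M.R v x := by
  intro m
  induction m with
  | zero =>
      intro w σ h j hj v hr
      have hj0 : j = 0 := Nat.le_zero.mp hj
      subst hj0; cases hr
      rw [lamF, msat_exDia] at h
      obtain ⟨d, x, hx, -⟩ := h
      exact ⟨x, hx⟩
  | succ m ih =>
      intro w σ h j hj v hr
      rw [lamF, msat_and] at h
      obtain ⟨h1, h2⟩ := h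
      rcases Nat.lt_or_ge j (m + 1) with hlt | hge
      · exact ih h1 j (by omega) v hr
      · have hj' : j = m + 1 := by omega
        subst hj'
        obtain ⟨σ', -, hs⟩ := iterBox_elim h2 hr
        rw [msat_exDia] at hs
        obtain ⟨d, x, hx, -⟩ := hs
        exact ⟨x, hx⟩

lemma msat_exDia_top {M : ConstModel W D} {w : W} {σ : ℕ → D} {z : ℕ}
    (h : ∃ v, M.R w v) : MSat M w σ (MF.exDia z MF.top) := by
  obtain ⟨v, hv⟩ := h
  obtain ⟨d⟩ := M.nonempty_D
  rw [msat_exDia]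
  exact ⟨d, v, hv, msat_top⟩

lemma lam_all {M : ConstModel W D} {z : ℕ} (hsucc : ∀ w : W, ∃ v, M.R w v) :
    ∀ (m : ℕ) (w : W) (σ : ℕ → D), MSat M w σ (lamF z m) := by
  intro m
  induction m with
  | zero => intro w σ; rw [lamF]; exact msat_exDia_top (hsucc w)
  | succ m ih =>
      intro w σ
      rw [lamF, msat_and]
      exact ⟨ih w σ, iterBox_intro (fun w σ => msat_exDia_top (hsucc w)) _ _ _⟩

/-! #### The total model used in the forward direction -/

/-- The constant-domain model over worlds `D × D` with the total relation. -/
def Mtot (D : Type) (hD : Nonempty D) (Rel : D → D → Prop) : ConstModel (D × D) D where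
  R := fun _ _ => True
  nonempty_W := hD.elim fun d => ⟨(d, d)⟩
  nonempty_D := hD
  val := fun w p d => (if p = 0 then d = w.1 else d = w.2) ∧ Rel w.1 w.2

lemma Mtot_hA {D : Type} {hD : Nonempty D} {Rel : D → D → Prop} (v : D × D) (d e : D) :
    (∃ x, (Mtot D hD Rel).R v x ∧ (Mtot D hD Rel).val x 0 d ∧ (Mtot D hD Rel).val x 1 e)
      ↔ Rel d e := by
  constructor
  · rintro ⟨x, -, ⟨h1, hR⟩, ⟨h2, -⟩⟩
    simp only [if_pos rfl] at h1
    rw [if_neg (by norm_num)] at h2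
    subst h1; subst h2
    exact hR
  · intro h
    exact ⟨(d, e), trivial, ⟨by simp [Mtot], h⟩, ⟨by simp [Mtot], h⟩⟩

lemma Mtot_atoms {D : Type} {hD : Nonempty D} {Rel : D → D → Prop} {w : D × D}
    {σ : ℕ → D} {z x y : ℕ} (hx : x ≠ z) (hy : y ≠ z) :
    MSat (Mtot D hD Rel) w σ (MF.exDia z (.and (.atom 0 x) (.atom 1 y))) ↔
      Rel (σ x) (σ y) := by
  rw [msat_atoms hx hy]
  exact Mtot_hA w (σ x) (σ y)

lemma total_main {D : Type} (hD : Nonempty D) (Rel : D → D → Prop) (z : ℕ) :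
    ∀ (α' : Prenex) (w : D × D) (σ : ℕ → D), z ∉ α'.vars →
      (MSat (Mtot D hD Rel) w σ (psiTr z α') ↔ α'.Sat Rel σ) := by
  intro α'
  induction α' with
  | qf β =>
      intro w σ hz
      exact trQF_iff (Mtot_hA w) β σ hz
  | ex x αα ih =>
      intro w σ hz
      have hz' : z ∉ αα.vars := fun h => hz (Finset.mem_insert_of_mem h)
      rw [psiTr, msat_exDia]
      show (∃ d v, (Mtot D hD Rel).R w v ∧ _) ↔ ∃ d, αα.Sat Rel (Function.update σ x d)
      constructor
      · rintro ⟨d, v, -, hs⟩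
        exact ⟨d, (ih v _ hz').mp hs⟩
      · rintro ⟨d, hs⟩
        exact ⟨d, w, trivial, (ih w _ hz').mpr hs⟩
  | all x αα ih =>
      intro w σ hz
      have hz' : z ∉ αα.vars := fun h => hz (Finset.mem_insert_of_mem h)
      rw [psiTr, msat_allBox]
      constructor
      · intro h d
        exact (ih w _ hz').mp (h d w trivial)
      · intro h d v _
        exact (ih v _ hz').mpr (h d)

lemma Mtot_iterDia {D : Type} {hD : Nonempty D} {Rel : D → D → Prop} {z z₁ z₂ : ℕ}
    (h1 : z₁ ≠ z) (h2 : z₂ ≠ z) :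
    ∀ (m : ℕ) (w : D × D) (σ : ℕ → D),
      MSat (Mtot D hD Rel) w σ (iterDia z m (MF.exDia z (.and (.atom 0 z₁) (.atom 1 z₂)))) ↔
        Rel (σ z₁) (σ z₂) := by
  intro m
  induction m with
  | zero => intro w σ; exact Mtot_atoms h1 h2
  | succ m ih =>
      intro w σ
      rw [iterDia, msat_exDia]
      constructor
      · rintro ⟨d, v, -, hs⟩
        rw [ih v _, Function.update_of_ne h1, Function.update_of_ne h2] at hs
        exact hs
      · intro h
        obtain ⟨d⟩ := hD
        refine ⟨d, w, trivial, ?_⟩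
        rw [ih w _, Function.update_of_ne h1, Function.update_of_ne h2]
        exact h

lemma Mtot_iterBox {D : Type} {hD : Nonempty D} {Rel : D → D → Prop} {z z₁ z₂ : ℕ}
    (h1 : z₁ ≠ z) (h2 : z₂ ≠ z) :
    ∀ (m : ℕ) (w : D × D) (σ : ℕ → D),
      MSat (Mtot D hD Rel) w σ (iterBox z m (MF.exDia z (.and (.atom 0 z₁) (.atom 1 z₂)))) ↔
        Rel (σ z₁) (σ z₂) := by
  intro m
  induction m with
  | zero => intro w σ; exact Mtot_atoms h1 h2
  | succ m ih =>
      intro m' σ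
      rw [iterBox, msat_allBox]
      constructor
      · intro h
        obtain ⟨d⟩ := hD
        have := (ih m' _).mp (h d m' trivial)
        rwa [Function.update_of_ne h1, Function.update_of_ne h2] at this
      · intro h d v _
        rw [ih v _, Function.update_of_ne h1, Function.update_of_ne h2]
        exact h

lemma Mtot_gam {D : Type} {hD : Nonempty D} {Rel : D → D → Prop} {z z₁ z₂ n : ℕ}
    (h1 : z₁ ≠ z) (h2 : z₂ ≠ z) (w : D × D) (σ : ℕ → D) :
    MSat (Mtot D hD Rel) w σ (gamF z z₁ z₂ n) := by
  rw [gamF, msat_allBox]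
  intro d₁ v₁ _
  rw [msat_allBox]
  intro d₂ v₂ _
  rw [msat_imp, Mtot_iterDia h1 h2, Mtot_iterBox h1 h2]
  exact id

end Aux

/-- For every prenex FO(R) sentence `α = Q₁x₁⋯Qₙxₙ β`, `α` is
satisfiable in a first-order structure iff the translated formula
`φ_α := (∀z□)²ψ_α ∧ λ_{n+2} ∧ γₙ` is satisfiable at some world of some constant
domain model under some valuation (for fresh, pairwise distinct `z, z₁, z₂` not
appearing in `α`). -/
theorem fo_satisfiable_iff_translation_satisfiable
    (α : Prenex) (hsent : α.free = ∅) (z z₁ z₂ : ℕ)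
    (hz : z ∉ α.vars) (hz₁ : z₁ ∉ α.vars) (hz₂ : z₂ ∉ α.vars)
    (hd₁ : z ≠ z₁) (hd₂ : z ≠ z₂) (hd₃ : z₁ ≠ z₂) :
    FOSatisfiable α ↔ MSatisfiable (phiTr z z₁ z₂ α) := by
  constructor
  · -- forward direction: FO model gives total constant-domain model
    rintro ⟨D, hD, Rel, vfo, hsat⟩
    obtain ⟨d₀⟩ := hD
    refine ⟨D × D, D, Mtot D ⟨d₀⟩ Rel, (d₀, d₀), vfo, ?_, ?_, ?_⟩
    · -- (∀z□)² ψ_α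
      have e2 : iterBox z 2 (psiTr z α) = .allBox z (.allBox z (psiTr z α)) := rfl
      rw [e2, msat_allBox]
      intro d v _
      rw [msat_allBox]
      intro d' v' _
      rw [total_main ⟨d₀⟩ Rel z α v' _ hz]
      refine (prenex_sat_congr fun a ha => ?_).mp hsat
      have haz : a ≠ z := fun h => hz (h ▸ ha)
      rw [Function.update_of_ne haz, Function.update_of_ne haz]
    · -- λ_{n+2}
      exact lam_all (fun w => ⟨w, trivial⟩) _ _ _
    · -- γₙ
      exact Mtot_gam hd₁.symm hd₂.symm _ _
  · -- backward direction
    rintro ⟨W, D, M, w₀, σ₀, h⟩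
    obtain ⟨h1, h2, h3⟩ : MSat M w₀ σ₀ (iterBox z 2 (psiTr z α)) ∧
        MSat M w₀ σ₀ (lamF z (α.depth + 2)) ∧ MSat M w₀ σ₀ (gamF z z₁ z₂ α.depth) := h
    obtain ⟨d₀⟩ := M.nonempty_D
    set n := α.depth with hn
    have hsucc0 : ∀ j, j ≤ n + 2 → ∀ v, reachN M j w₀ v → ∃ x, M.R v x := lam_elim h2
    obtain ⟨u₁, hu₁⟩ := hsucc0 0 (by omega) w₀ rfl
    obtain ⟨u, hu⟩ := hsucc0 1 (by omega) u₁ ⟨u₁, hu₁, rfl⟩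
    set Rel : D → D → Prop := fun d e =>
      MSat M u (Function.update (Function.update σ₀ z₁ d) z₂ e)
        (iterDia z n (MF.exDia z (.and (.atom 0 z₁) (.atom 1 z₂)))) with hRel
    have hτval : ∀ d e : D, (Function.update (Function.update σ₀ z₁ d) z₂ e) z₁ = d ∧
        (Function.update (Function.update σ₀ z₁ d) z₂ e) z₂ = e := by
      intro d e
      constructor
      · rw [Function.update_of_ne hd₃, Function.update_self]
      · rw [Function.update_self]
    have hA : ∀ (v : W) (d e : D), reachN M n u v →
        ((∃ x, M.R v x ∧ M.val x 0 d ∧ M.val x 1 e) ↔ Rel d e) := by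
      intro v d e hr
      constructor
      · intro hx
        refine iterDia_intro hd₁.symm hd₂.symm hr ?_
        rw [(hτval d e).1, (hτval d e).2]
        exact hx
      · intro hRde
        have himp := h3 d u₁ hu₁
        rw [msat_allBox] at himp
        have himp2 := himp e u hu
        rw [msat_imp] at himp2
        have hcons := himp2 hRde
        have := iterBox_elim_atoms hd₁.symm hd₂.symm hcons hr
        rwa [(hτval d e).1, (hτval d e).2] at this
    have hreach2 : reachN M 2 w₀ u := ⟨u₁, hu₁, u, hu, rfl⟩
    have hsuccU : ∀ (m : ℕ) (v : W), m ≤ n → reachN M m u v → ∃ x, M.R v x := by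
      intro m v hm hr
      exact hsucc0 (2 + m) (by omega) v (reachN_trans hreach2 hr)
    have hψ : MSat M u (Function.update (Function.update σ₀ z d₀) z d₀) (psiTr z α) :=
      h1 d₀ u₁ hu₁ d₀ u hu
    have hmain := backward_main M z n u Rel hA hsuccU α 0 u
      (Function.update (Function.update σ₀ z d₀) z d₀) (by omega) hz rfl
    exact ⟨D, ⟨d₀⟩, Rel, _, hmain.mp hψ⟩
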